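/- For the massive Thirring soliton U_ω with ω ∈ (−1,1), the L² norm satisfies ∫_ℝ |U_ω(x)|² dx = 4 arctan(√((1−ω)/(1+ω))). -/

import Mathlib

/-!
With `μ = √(1 - ω²)`, the numerator of `U_ω` has squared modulus
`(1 + ω) cosh² (μx) + (1 - ω) sinh² (μx) = ω + cosh (2μx)`, which is the denominator, so
`|U_ω(x)|² = 2μ² / (ω + cosh (2μx))`. This even density is the derivative of
`2 arctan (a tanh (μx))` with `a = √((1 - ω)/(1 + ω))`, because `a μ (1 + ω) = μ²`;
hence its integral over `(0, ∞)` is `2 arctan a`, and over `ℝ` twice that.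
-/

open MeasureTheory Real Filter Set Topology

/-- The massive Thirring line soliton profile. -/
noncomputable def thirringSoliton (ω x : ℝ) : ℂ :=
  (↑(Real.sqrt 2 * Real.sqrt (1 - ω ^ 2)) : ℂ) *
    ((↑(Real.sqrt (1 + ω) * Real.cosh (Real.sqrt (1 - ω ^ 2) * x)) : ℂ)
      - Complex.I * (↑(Real.sqrt (1 - ω) * Real.sinh (Real.sqrt (1 - ω ^ 2) * x)) : ℂ)) /
    (↑(ω + Real.cosh (2 * Real.sqrt (1 - ω ^ 2) * x)) : ℂ)

namespace Real

lemma tanh_eq_one_sub_two_div (x : ℝ) : tanh x = 1 - 2 / (exp (2 * x) + 1) := by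
  have hexp : exp (2 * x) = exp x * exp x := by rw [two_mul, exp_add]
  have hx : exp x ≠ 0 := (exp_pos x).ne'
  rw [tanh_eq, exp_neg, hexp]
  field_simp
  ring

lemma tendsto_tanh_atTop : Tendsto tanh atTop (𝓝 1) := by
  have hexp : Tendsto (fun x : ℝ ↦ exp (2 * x) + 1) atTop atTop :=
    (tendsto_exp_atTop.comp (tendsto_id.const_mul_atTop two_pos)).atTop_add tendsto_const_nhds
  have h := (tendsto_const_nhds (x := (1 : ℝ))).sub
    ((tendsto_const_nhds (x := (2 : ℝ))).div_atTop hexp)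
  rw [sub_zero] at h
  exact h.congr fun x ↦ (tanh_eq_one_sub_two_div x).symm

lemma hasDerivAt_tanh (x : ℝ) : HasDerivAt tanh (1 / cosh x ^ 2) x := by
  have hquot := (hasDerivAt_sinh x).div (hasDerivAt_cosh x) (cosh_pos x).ne'
  have htanh : tanh = sinh / cosh := funext tanh_eq_sinh_div_cosh
  rw [htanh, ← cosh_sq_sub_sinh_sq x]
  exact hquot.congr_deriv (by ring)

lemma hasDerivAt_arctan_mul_tanh_mul (a c x : ℝ) :
    HasDerivAt (fun x ↦ arctan (a * tanh (c * x)))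
      (a * c / (cosh (c * x) ^ 2 + a ^ 2 * sinh (c * x) ^ 2)) x := by
  have hlin : HasDerivAt (fun x ↦ c * x) c x := by simpa using (hasDerivAt_id x).const_mul c
  have htanh := ((hasDerivAt_tanh _).comp x hlin).const_mul a
  refine ((hasDerivAt_arctan _).comp x htanh).congr_deriv ?_
  have hc : cosh (c * x) ≠ 0 := (cosh_pos _).ne'
  rw [Function.comp_apply, tanh_eq_sinh_div_cosh]
  field_simp

lemma add_cosh_two_mul (ω y : ℝ) :
    ω + cosh (2 * y) = (1 + ω) * cosh y ^ 2 + (1 - ω) * sinh y ^ 2 := by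
  linear_combination cosh_two_mul y - ω * cosh_sq_sub_sinh_sq y

lemma add_cosh_pos {ω : ℝ} (hω : -1 < ω) (y : ℝ) : 0 < ω + cosh y := by
  linarith [one_le_cosh y]

end Real

noncomputable def thirringDensity (ω x : ℝ) : ℝ :=
  2 * (1 - ω ^ 2) / (ω + cosh (2 * √(1 - ω ^ 2) * x))

lemma thirringDensity_abs (ω x : ℝ) : thirringDensity ω |x| = thirringDensity ω x := by
  have hμ : 0 ≤ 2 * √(1 - ω ^ 2) := by positivity
  rw [thirringDensity, thirringDensity, ← abs_of_nonneg hμ, ← abs_mul, cosh_abs,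
    abs_of_nonneg hμ]

section Density

variable {ω : ℝ} (hω : ω ∈ Ioo (-1 : ℝ) 1)
include hω

lemma norm_thirringSoliton_sq (x : ℝ) :
    ‖thirringSoliton ω x‖ ^ 2 = thirringDensity ω x := by
  unfold thirringSoliton thirringDensity
  set μ := √(1 - ω ^ 2)
  have hden := (add_cosh_pos hω.1 (2 * μ * x)).ne'
  have hnum : Complex.normSq ((↑(√(1 + ω) * cosh (μ * x)) : ℂ)
      - Complex.I * (↑(√(1 - ω) * sinh (μ * x)) : ℂ)) = ω + cosh (2 * μ * x) := by
    have hp : √(1 + ω) ^ 2 = 1 + ω := sq_sqrt (by linarith [hω.1])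
    have hm : √(1 - ω) ^ 2 = 1 - ω := sq_sqrt (by linarith [hω.2])
    rw [mul_assoc, add_cosh_two_mul]
    simp only [Complex.normSq_apply, Complex.sub_re, Complex.sub_im, Complex.mul_re,
      Complex.mul_im, Complex.I_re, Complex.I_im, Complex.ofReal_re, Complex.ofReal_im]
    linear_combination cosh (μ * x) ^ 2 * hp + sinh (μ * x) ^ 2 * hm
  have hpre : Complex.normSq (↑(√2 * μ) : ℂ) = 2 * (1 - ω ^ 2) := by
    rw [Complex.normSq_ofReal, ← sq, mul_pow, sq_sqrt zero_le_two,
      sq_sqrt (by nlinarith [hω.1, hω.2])]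
  rw [Complex.sq_norm, Complex.normSq_div, Complex.normSq_mul,
    hnum, hpre, Complex.normSq_ofReal]
  field_simp

lemma thirringDensity_nonneg (x : ℝ) : 0 ≤ thirringDensity ω x :=
  div_nonneg (by nlinarith [hω.1, hω.2]) (add_cosh_pos hω.1 _).le

lemma hasDerivAt_thirringDensity_primitive (x : ℝ) :
    HasDerivAt (fun x ↦ 2 * arctan (√((1 - ω) / (1 + ω)) * tanh (√(1 - ω ^ 2) * x)))
      (thirringDensity ω x) x := by
  obtain ⟨hω₁, hω₂⟩ := hω
  unfold thirringDensity
  set μ := √(1 - ω ^ 2)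
  set a := √((1 - ω) / (1 + ω))
  have ha : a ^ 2 * (1 + ω) = 1 - ω := by
    rw [sq_sqrt (div_nonneg (by linarith) (by linarith))]
    field_simp [(by linarith : 1 + ω ≠ 0)]
  have haμ : a * μ = 1 - ω := by
    rw [← sqrt_mul (div_nonneg (by linarith) (by linarith)),
      show (1 - ω) / (1 + ω) * (1 - ω ^ 2) = (1 - ω) ^ 2 by
        field_simp [(by linarith : 1 + ω ≠ 0)]; ring,
      sqrt_sq (by linarith)]
  refine ((hasDerivAt_arctan_mul_tanh_mul a μ x).const_mul 2).congr_deriv ?_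
  have hden := (add_cosh_pos hω₁ (2 * (μ * x))).ne'
  have hden' : cosh (μ * x) ^ 2 + a ^ 2 * sinh (μ * x) ^ 2 ≠ 0 := by
    have := cosh_pos (μ * x); positivity
  rw [add_cosh_two_mul] at hden
  rw [mul_assoc, add_cosh_two_mul, mul_div_assoc', div_eq_div_iff hden' hden]
  linear_combination 2 * ((1 + ω) * cosh (μ * x) ^ 2 + (1 - ω) * sinh (μ * x) ^ 2) * haμ
    - 2 * (1 - ω) * sinh (μ * x) ^ 2 * ha

end Density

theorem thirringSoliton_L2 (ω : ℝ) (hω : ω ∈ Set.Ioo (-1 : ℝ) 1) :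
    ∫ x : ℝ, ‖thirringSoliton ω x‖ ^ 2
      = 4 * Real.arctan (Real.sqrt ((1 - ω) / (1 + ω))) := by
  have hμ : 0 < √(1 - ω ^ 2) := sqrt_pos.2 (by nlinarith [hω.1, hω.2])
  have hlim : Tendsto (fun x ↦ 2 * arctan (√((1 - ω) / (1 + ω)) * tanh (√(1 - ω ^ 2) * x)))
      atTop (𝓝 (2 * arctan √((1 - ω) / (1 + ω)))) := by
    simpa using ((continuous_arctan.tendsto _).comp ((tendsto_tanh_atTop.comp
      (tendsto_id.const_mul_atTop hμ)).const_mul _)).const_mul 2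
  calc ∫ x, ‖thirringSoliton ω x‖ ^ 2
      = ∫ x, thirringDensity ω |x| := by
        simp only [norm_thirringSoliton_sq hω, thirringDensity_abs]
    _ = 2 * ∫ x in Ioi 0, thirringDensity ω x := integral_comp_abs
    _ = 2 * (2 * arctan √((1 - ω) / (1 + ω)) - 0) := by
        rw [integral_Ioi_of_hasDerivAt_of_nonneg'
          (fun x _ ↦ hasDerivAt_thirringDensity_primitive hω x)
          (fun x _ ↦ thirringDensity_nonneg hω x) hlim]
        simp
    _ = 4 * arctan √((1 - ω) / (1 + ω)) := by ring
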